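/- In the graph G' obtained by replacing each edge e = (x,λ,y) of G by the fresh path ψ(e), every path from a vertex s ∈ V to a vertex t ∈ V whose internal visits to V decompose it into minimal segments between V-vertices is a concatenation of paths ψ(e₁)·...·ψ(e_k) for edges e₁,...,e_k forming a path from s to t in G, provided that each minimal segment between consecutive V-vertices that starts at some x and only uses the fresh vertices of a single edge e must traverse ψ(e) (i.e., fresh paths are simple and the fresh vertices of distinct edges are disjoint, and each fresh path can only be traversed from its source to its sink). Consequently, there is a path from s to t in G' with label a Dyck word if and only if there is a path from s to t in G whose label w satisfies: φ(w) is a Dyck word, where the directedness of G' forces every G'-path between V-vertices to be of the form ψ(π). -/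

import Mathlib

/-- Paths in a labeled graph, recording the label word. -/
inductive PathLabel {V Λ : Type*} (E : V → Λ → V → Prop) : V → V → List Λ → Prop
  | nil (v : V) : PathLabel E v v []
  | cons {u v w : V} {l : Λ} {ls : List Λ} :
      E u l v → PathLabel E v w ls → PathLabel E u w (l :: ls)

/-- Two-letter Dyck language over `Fin 2 × Bool`, where `(0,false)` = a,
`(0,true)` = ā, `(1,false)` = b, `(1,true)` = b̄. -/
inductive Dyck : List (Fin 2 × Bool) → Prop
  | nil : Dyck []
  | cons (i : Fin 2) {u v : List (Fin 2 × Bool)} :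
      Dyck u → Dyck v → Dyck ((i, false) :: u ++ (i, true) :: v)

/-- The `i`-th node on the fresh path replacing the edge `e = (x, λ, y)`,
where `m` is the length of `φ λ`. -/
def node {V Λ : Type*} (e : V × Λ × V) (m i : ℕ) :
    V ⊕ ((V × Λ × V) × ℕ) :=
  if i = 0 then Sum.inl e.1 else if i = m then Sum.inl e.2.2 else Sum.inr (e, i)

/-- The edge relation of the graph `G'` obtained by replacing each edge
`e = (x, λ, y)` by a fresh directed simple path from `x` to `y` labeled `φ λ`,
with fresh internal vertices specific to `e`. -/
def ReplEdge {V Λ Λ' : Type*} (E : V → Λ → V → Prop) (φ : Λ → List Λ') :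
    (V ⊕ ((V × Λ × V) × ℕ)) → Λ' → (V ⊕ ((V × Λ × V) × ℕ)) → Prop :=
  fun u l v => ∃ e : V × Λ × V, E e.1 e.2.1 e.2.2 ∧ ∃ i : ℕ,
    (φ e.2.1)[i]? = some l ∧
      u = node e (φ e.2.1).length i ∧ v = node e (φ e.2.1).length (i + 1)

/-!
A path of `G'` that leaves a vertex of `V` enters the fresh path `ψ e` of some edge `e` at its
source. Its internal vertices `(e, i)` are private to `e` and have a single outgoing edge, to
position `i + 1`, so the path is forced along `ψ e` to its sink before it can go anywhere else.
Hence, cutting a `G'`-path at its visits to `V` writes its label as `φ λ₁ ⋯ φ λₖ` for a path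
`λ₁ ⋯ λₖ` of `G`; conversely every edge of `G` is realized by its fresh path.
-/

theorem PathLabel.append {V Λ : Type*} {E : V → Λ → V → Prop} {u v x : V} {w₁ w₂ : List Λ}
    (h₁ : PathLabel E u v w₁) (h₂ : PathLabel E v x w₂) : PathLabel E u x (w₁ ++ w₂) := by
  induction h₁ with
  | nil => exact h₂
  | cons he _ ih => exact .cons he (ih h₂)

section Replacement

variable {V Λ Λ' : Type*} {E : V → Λ → V → Prop} {φ : Λ → List Λ'}

theorem node_zero (e : V × Λ × V) (m : ℕ) : node e m 0 = Sum.inl e.1 := by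
  simp [node]

theorem node_self (e : V × Λ × V) {m : ℕ} (hm : m ≠ 0) : node e m m = Sum.inl e.2.2 := by
  simp [node, hm]

theorem node_of_pos_of_lt (e : V × Λ × V) {m i : ℕ} (h₀ : 0 < i) (hm : i < m) :
    node e m i = Sum.inr (e, i) := by
  simp [node, h₀.ne', hm.ne]

theorem replEdge_node (e : V × Λ × V) (he : E e.1 e.2.1 e.2.2) {i : ℕ}
    (hi : i < (φ e.2.1).length) :
    ReplEdge E φ (node e (φ e.2.1).length i) (φ e.2.1)[i]
      (node e (φ e.2.1).length (i + 1)) :=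
  ⟨e, he, i, List.getElem?_eq_getElem hi, rfl, rfl⟩

theorem replEdge_from_inl {s : V} {l : Λ'} {v : V ⊕ ((V × Λ × V) × ℕ)}
    (h : ReplEdge E φ (Sum.inl s) l v) :
    ∃ e : V × Λ × V, E e.1 e.2.1 e.2.2 ∧ e.1 = s ∧ (φ e.2.1)[0]? = some l ∧
      v = node e (φ e.2.1).length 1 := by
  obtain ⟨e, he, i, hl, hu, rfl⟩ := h
  obtain rfl : i = 0 := by
    by_contra hi
    have hlt := (List.getElem?_eq_some_iff.1 hl).1
    simp [node_of_pos_of_lt e (Nat.pos_of_ne_zero hi) hlt] at hu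
  exact ⟨e, he, Sum.inl.inj (by rw [hu, node_zero]), hl, rfl⟩

theorem replEdge_from_inr {e : V × Λ × V} {i : ℕ} {l : Λ'} {v : V ⊕ ((V × Λ × V) × ℕ)}
    (h : ReplEdge E φ (Sum.inr (e, i)) l v) :
    (φ e.2.1)[i]? = some l ∧ v = node e (φ e.2.1).length (i + 1) := by
  obtain ⟨e', he', i', hl, hu, rfl⟩ := h
  have hlt := (List.getElem?_eq_some_iff.1 hl).1
  obtain ⟨rfl, rfl⟩ : e' = e ∧ i' = i := by
    unfold node at hu
    split_ifs at hu
    cases hu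
    exact ⟨rfl, rfl⟩
  exact ⟨hl, rfl⟩

theorem pathLabel_replEdge_node_drop (e : V × Λ × V) (he : E e.1 e.2.1 e.2.2) {i : ℕ}
    (hi : i ≤ (φ e.2.1).length) :
    PathLabel (ReplEdge E φ) (node e (φ e.2.1).length i)
      (node e (φ e.2.1).length (φ e.2.1).length) ((φ e.2.1).drop i) := by
  induction hi using Nat.decreasingInduction with
  | self => simpa using PathLabel.nil _
  | of_succ k hk ih =>
    rw [List.drop_eq_getElem_cons hk]
    exact .cons (replEdge_node e he hk) ih

theorem pathLabel_replEdge_of_edge {x y : V} {l : Λ} (he : E x l y) (hl : φ l ≠ []) :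
    PathLabel (ReplEdge E φ) (Sum.inl x) (Sum.inl y) (φ l) := by
  have hm : (φ l).length ≠ 0 := by simpa using hl
  simpa [node_zero, node_self _ hm] using
    pathLabel_replEdge_node_drop (φ := φ) (x, l, y) he (Nat.zero_le _)

theorem PathLabel.replEdge (hφ : ∀ l, φ l ≠ []) {s t : V} {w : List Λ}
    (h : PathLabel E s t w) :
    PathLabel (ReplEdge E φ) (Sum.inl s) (Sum.inl t) (w.map φ).flatten := by
  induction h with
  | nil v => exact .nil _
  | cons he _ ih => exact (pathLabel_replEdge_of_edge he (hφ _)).append ih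

/-- The second conjunct is the invariant for a path that starts inside `ψ e`, at position `i`. -/
theorem PathLabel.exists_of_replEdge_from_inl_and_node {u z : V ⊕ ((V × Λ × V) × ℕ)}
    {w' : List Λ'} (h : PathLabel (ReplEdge E φ) u z w') {t : V} (hz : z = Sum.inl t) :
    (∀ s, u = Sum.inl s → ∃ w, PathLabel E s t w ∧ w' = (w.map φ).flatten) ∧
    (∀ e i, 0 < i → i ≤ (φ e.2.1).length → u = node e (φ e.2.1).length i →
      ∃ w, PathLabel E e.2.2 t w ∧ w' = (φ e.2.1).drop i ++ (w.map φ).flatten) := by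
  induction h with
  | nil v =>
    subst hz
    refine ⟨fun s hs => ⟨[], Sum.inl.inj hs ▸ .nil _, rfl⟩, fun e i h₀ hi hu => ?_⟩
    obtain rfl : i = (φ e.2.1).length := by
      by_contra hne
      simp [node_of_pos_of_lt e h₀ (lt_of_le_of_ne hi hne)] at hu
    rw [node_self e h₀.ne'] at hu
    exact ⟨[], Sum.inl.inj hu ▸ .nil _, by simp⟩
  | @cons u v z l ls hedge _ ih =>
    have from_inl : ∀ s, u = Sum.inl s →
        ∃ w, PathLabel E s t w ∧ l :: ls = (w.map φ).flatten := by
      rintro s rfl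
      obtain ⟨e, he, rfl, hl, rfl⟩ := replEdge_from_inl hedge
      have hpos := (List.getElem?_eq_some_iff.1 hl).1
      obtain ⟨w, hw, rfl⟩ := (ih hz).2 e 1 one_pos hpos rfl
      refine ⟨e.2.1 :: w, .cons he hw, ?_⟩
      rw [List.map_cons, List.flatten_cons, ← List.cons_append,
        ← (List.getElem?_eq_some_iff.1 hl).2, ← List.drop_eq_getElem_cons hpos, List.drop_zero]
    refine ⟨from_inl, fun e i h₀ hi hu => ?_⟩
    rcases hi.lt_or_eq with hlt | rfl
    · rw [node_of_pos_of_lt e h₀ hlt] at hu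
      subst hu
      obtain ⟨hl, rfl⟩ := replEdge_from_inr hedge
      obtain ⟨w, hw, rfl⟩ := (ih hz).2 e (i + 1) (Nat.succ_pos i) hlt rfl
      refine ⟨w, hw, ?_⟩
      rw [List.drop_eq_getElem_cons hlt, (List.getElem?_eq_some_iff.1 hl).2, List.cons_append]
    · simpa using from_inl e.2.2 (hu.trans (node_self e h₀.ne'))

theorem PathLabel.exists_of_replEdge {s t : V} {w' : List Λ'}
    (h : PathLabel (ReplEdge E φ) (Sum.inl s) (Sum.inl t) w') :
    ∃ w, PathLabel E s t w ∧ w' = (w.map φ).flatten :=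
  (h.exists_of_replEdge_from_inl_and_node rfl).1 s rfl

end Replacement

theorem replacement_dyck_reachability {V Λ : Type*} (E : V → Λ → V → Prop)
    (φ : Λ → List (Fin 2 × Bool)) (hφ : ∀ l, φ l ≠ []) (s t : V) :
    (∃ w', PathLabel (ReplEdge E φ) (Sum.inl s) (Sum.inl t) w' ∧ Dyck w') ↔
      (∃ w, PathLabel E s t w ∧ Dyck ((w.map φ).flatten)) := by
  constructor
  · rintro ⟨w', h, hd⟩
    obtain ⟨w, hw, rfl⟩ := h.exists_of_replEdge
    exact ⟨w, hw, hd⟩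
  · rintro ⟨w, hw, hd⟩
    exact ⟨_, hw.replEdge hφ, hd⟩
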